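/- Let k ∈ ℂ, let y = (y₁,y₂,y₃) ∈ ℝ³ with y₃ ≠ 0, and let M = (m₁,m₂,m₃) ∈ ℝ³ with image current M_R = (m₁,m₂,−m₃) = R M. Define the vector field F(x) = G_k(x,y) M + G_k(x, R y) M_R on ℝ³ \ {y, R y}. Then for every x with x₃ = 0, the first two components of (∇×F)(x) vanish; that is, the tangential part of the curl of F vanishes on the plane x₃ = 0. -/

import Mathlib

/-!
Reflection `R` fixes every point `x` of the plane `x₃ = 0`, and `G_k(z, Ry) = G_k(Rz, y)`, so the
image term is `g ∘ R` with `g = G_k(·, y)`. At such an `x` the chain rule gives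
`∂ᵢ(g ∘ R) = ∂ᵢ g` for `i = 1, 2` and `∂₃(g ∘ R) = -∂₃ g`; combined with the sign flip of the
third component of `M_R`, the image contributions to the first two curl components exactly cancel
those of the source.
-/

noncomputable section

open MeasureTheory

/-- The Euclidean norm on `ℝ³` (realized as `Fin 3 → ℝ`). -/
def enorm3 (x : Fin 3 → ℝ) : ℝ := Real.sqrt (x 0 ^ 2 + x 1 ^ 2 + x 2 ^ 2)

/-- The Helmholtz Green's function `G_k(x,y) = exp(i k ‖x−y‖)/(4π ‖x−y‖)`. -/
def G (k : ℂ) (x y : Fin 3 → ℝ) : ℂ :=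
  Complex.exp (Complex.I * k * (enorm3 (x - y) : ℂ)) /
    (4 * (Real.pi : ℂ) * (enorm3 (x - y) : ℂ))

/-- Reflection across the plane `x₃ = 0`: `R(x₁,x₂,x₃) = (x₁,x₂,−x₃)`. -/
def refl3 (x : Fin 3 → ℝ) : Fin 3 → ℝ := ![x 0, x 1, -x 2]

/-- Partial derivative in the `i`-th coordinate direction. -/
def pd (i : Fin 3) (f : (Fin 3 → ℝ) → ℂ) (x : Fin 3 → ℝ) : ℂ :=
  fderiv ℝ f x (Pi.single i 1)

/-- The curl `∇×F = (∂₂F₃−∂₃F₂, ∂₃F₁−∂₁F₃, ∂₁F₂−∂₂F₁)` of a vector field. -/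
def curl (F : (Fin 3 → ℝ) → Fin 3 → ℂ) (x : Fin 3 → ℝ) : Fin 3 → ℂ :=
  ![pd 1 (fun z => F z 2) x - pd 2 (fun z => F z 1) x,
    pd 2 (fun z => F z 0) x - pd 0 (fun z => F z 2) x,
    pd 0 (fun z => F z 1) x - pd 1 (fun z => F z 0) x]

lemma refl3_refl3 (x : Fin 3 → ℝ) : refl3 (refl3 x) = x := by
  funext i; fin_cases i <;> simp [refl3]

def refl3CLE : (Fin 3 → ℝ) ≃L[ℝ] (Fin 3 → ℝ) :=
  LinearEquiv.toContinuousLinearEquiv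
    { toFun := refl3
      invFun := refl3
      map_add' := fun a b => by funext i; fin_cases i <;> simp [refl3]; ring
      map_smul' := fun c a => by funext i; fin_cases i <;> simp [refl3]
      left_inv := refl3_refl3
      right_inv := refl3_refl3 }

@[simp] lemma refl3CLE_apply (x : Fin 3 → ℝ) : refl3CLE x = refl3 x := rfl

lemma refl3_eq_self {x : Fin 3 → ℝ} (hx : x 2 = 0) : refl3 x = x := by
  funext i; fin_cases i <;> simp [refl3, hx]

lemma refl3_single_of_ne {i : Fin 3} (hi : i ≠ 2) : refl3 (Pi.single i 1) = Pi.single i 1 := by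
  funext j; fin_cases i <;> fin_cases j <;> simp_all [refl3]

lemma refl3_single_two : refl3 (Pi.single 2 1) = -Pi.single 2 1 := by
  funext j; fin_cases j <;> simp [refl3]

lemma enorm3_eq_norm (v : Fin 3 → ℝ) : enorm3 v = ‖(EuclideanSpace.equiv (Fin 3) ℝ).symm v‖ := by
  rw [EuclideanSpace.norm_eq, Fin.sum_univ_three]; simp [enorm3]

lemma enorm3_pos {v : Fin 3 → ℝ} (hv : v ≠ 0) : 0 < enorm3 v := by
  simpa [enorm3_eq_norm] using hv

lemma enorm3_sub_refl3 (x y : Fin 3 → ℝ) : enorm3 (x - refl3 y) = enorm3 (refl3 x - y) := by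
  simp only [enorm3, refl3, Pi.sub_apply, Matrix.cons_val, sub_neg_eq_add]
  ring_nf

lemma G_refl3_right (k : ℂ) (x y : Fin 3 → ℝ) : G k x (refl3 y) = G k (refl3 x) y := by
  simp only [G, enorm3_sub_refl3]

lemma differentiableAt_enorm3_sub {x y : Fin 3 → ℝ} (h : x ≠ y) :
    DifferentiableAt ℝ (fun z => enorm3 (z - y)) x := by
  simp only [enorm3_eq_norm]
  refine DifferentiableAt.norm ℝ ?_ ?_
  · fun_prop
  · simpa [sub_eq_zero] using h

lemma differentiableAt_G {k : ℂ} {x y : Fin 3 → ℝ} (h : x ≠ y) :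
    DifferentiableAt ℝ (fun z => G k z y) x := by
  have hr : DifferentiableAt ℝ (fun z => (enorm3 (z - y) : ℂ)) x :=
    Complex.ofRealCLM.differentiableAt.comp x (differentiableAt_enorm3_sub h)
  have hne : (4 * Real.pi * enorm3 (x - y) : ℂ) ≠ 0 := by
    have := enorm3_pos (sub_ne_zero.2 h)
    exact_mod_cast (by positivity : (4 * Real.pi * enorm3 (x - y)) ≠ 0)
  simp only [G, div_eq_mul_inv]
  exact (hr.const_mul _).cexp.mul ((hr.const_mul _).inv hne)

lemma pd_comp_refl3 (i : Fin 3) (f : (Fin 3 → ℝ) → ℂ) (x : Fin 3 → ℝ) :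
    pd i (fun z => f (refl3 z)) x = fderiv ℝ f (refl3 x) (refl3 (Pi.single i 1)) := by
  change fderiv ℝ (f ∘ refl3CLE) x _ = _
  rw [refl3CLE.comp_right_fderiv]
  rfl

lemma pd_add_mul_const {f₁ f₂ : (Fin 3 → ℝ) → ℂ} {x : Fin 3 → ℝ} (h₁ : DifferentiableAt ℝ f₁ x)
    (h₂ : DifferentiableAt ℝ f₂ x) (i : Fin 3) (c₁ c₂ : ℂ) :
    pd i (fun z => f₁ z * c₁ + f₂ z * c₂) x = pd i f₁ x * c₁ + pd i f₂ x * c₂ := by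
  simp only [pd, fderiv_fun_add (h₁.mul_const c₁) (h₂.mul_const c₂), fderiv_mul_const h₁,
    fderiv_mul_const h₂]
  simp [mul_comm]

def imageField (g : (Fin 3 → ℝ) → ℂ) (M : Fin 3 → ℝ) : (Fin 3 → ℝ) → Fin 3 → ℂ :=
  fun z i => g z * (M i : ℂ) + g (refl3 z) * (refl3 M i : ℂ)

theorem curl_imageField_tangential_eq_zero {g : (Fin 3 → ℝ) → ℂ} {x : Fin 3 → ℝ}
    (hx : x 2 = 0) (hg : DifferentiableAt ℝ g x) (M : Fin 3 → ℝ) :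
    curl (imageField g M) x 0 = 0 ∧ curl (imageField g M) x 1 = 0 := by
  have hRx := refl3_eq_self hx
  have hgR : DifferentiableAt ℝ (fun z => g (refl3 z)) x := by
    have : DifferentiableAt ℝ g (refl3CLE x) := by rwa [refl3CLE_apply, hRx]
    exact this.comp x refl3CLE.differentiableAt
  have hpd (i : Fin 3) (hi : i ≠ 2) : pd i (fun z => g (refl3 z)) x = pd i g x := by
    rw [pd_comp_refl3, hRx, refl3_single_of_ne hi, pd]
  have hpd₂ : pd 2 (fun z => g (refl3 z)) x = -pd 2 g x := by
    rw [pd_comp_refl3, hRx, refl3_single_two, map_neg, pd]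
  simp only [curl, imageField, Matrix.cons_val, pd_add_mul_const hg hgR, hpd 0 (by decide),
    hpd 1 (by decide), hpd₂]
  simp only [refl3, Matrix.cons_val, Complex.ofReal_neg]
  constructor <;> ring

/-- For a magnetic point current `M` at `y` (with `y₃ ≠ 0`) together with its image
current `M_R = RM` at `Ry`, the field `F(x) = G_k(x,y)M + G_k(x,Ry)M_R` has a curl
whose tangential part vanishes on the plane `x₃ = 0`. -/
theorem statement10 (k : ℂ) (y : Fin 3 → ℝ) (hy : y 2 ≠ 0) (M : Fin 3 → ℝ)
    (x : Fin 3 → ℝ) (hx : x 2 = 0) :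
    curl (fun z i => G k z y * (M i : ℂ) + G k z (refl3 y) * (refl3 M i : ℂ)) x 0 = 0 ∧
      curl (fun z i => G k z y * (M i : ℂ) + G k z (refl3 y) * (refl3 M i : ℂ)) x 1 = 0 := by
  have hxy : x ≠ y := fun h => hy (h ▸ hx)
  simp only [G_refl3_right]
  exact curl_imageField_tangential_eq_zero hx (differentiableAt_G hxy) M
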